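/- Under the assumptions that H(s,y) = σ(s,y) - σ̄(y) is bounded and G(r,y) = ∫₀ʳ(σ(s,y)-σ̄(y))ds is bounded, there is a constant C such that for all t ∈ (0,T], x, y ∈ ℝ, ε > 0: |∫₀ᵗ p(t-s, x-y)(σ(s/ε, y) - σ̄(y)) ds| ≤ C√ε, where p is the Gaussian heat kernel. -/

import Mathlib

open MeasureTheory Real intervalIntegral

/-! The kernel `s ↦ p(t - s, c)` satisfies `p(u, c) ≤ u^{-1/2}/(2√π)`, so the last stretch
`[t - ε, t]` of the integral (all of it when `t ≤ ε`) is `O(√ε)` by the bound on `H` alone.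
On `[0, t - ε]` the kernel is smooth, and integrating by parts against the primitive
`∫₀ʳ H(s/ε, y) ds = ε G(r/ε, y) = O(ε)` leaves the boundary term `p(ε, c) · O(ε)` and
`O(ε) · ∫₀^{t-ε} |∂ᵤp(t - r, c)| dr`. Since `|∂ᵤp(u, c)| ≤ u^{-3/2}/(2√π)`, both are
`O(ε · ε^{-1/2}) = O(√ε)`. -/

open Set
open scoped ContDiff

noncomputable def heatKernel (u c : ℝ) : ℝ := (2 * √(π * u))⁻¹ * exp (-c ^ 2 / (4 * u))

section HeatKernel

variable {u c : ℝ}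

lemma heatKernel_nonneg : 0 ≤ heatKernel u c := by
  unfold heatKernel; positivity

lemma heatKernel_eq_rpow (hu : 0 ≤ u) :
    heatKernel u c = (2 * √π)⁻¹ * u ^ (-(1 / 2 : ℝ)) * exp (-c ^ 2 / (4 * u)) := by
  rw [heatKernel, sqrt_mul pi_nonneg, rpow_neg hu, ← sqrt_eq_rpow, mul_inv, mul_inv]
  ring

lemma heatKernel_le (hu : 0 ≤ u) : heatKernel u c ≤ (2 * √π)⁻¹ * u ^ (-(1 / 2 : ℝ)) := by
  rw [heatKernel_eq_rpow hu]
  refine mul_le_of_le_one_right (by positivity) (exp_le_one_iff.2 ?_)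
  rw [neg_div]
  exact neg_nonpos.2 (by positivity)

lemma contDiffOn_heatKernel : ContDiffOn ℝ ∞ (heatKernel · c) (Ioi 0) := by
  unfold heatKernel
  fun_prop (disch := intro x hx; have : 0 < x := hx; positivity)

lemma measurable_heatKernel : Measurable (heatKernel · c) := by
  unfold heatKernel; fun_prop

lemma hasDerivAt_heatKernel (hu : 0 < u) :
    HasDerivAt (heatKernel · c) (heatKernel u c * (c ^ 2 / (4 * u ^ 2) - 1 / (2 * u))) u := by
  have h₁ := ((((hasDerivAt_id' u).const_mul π).sqrt (by positivity)).const_mul 2).inv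
    (by positivity : 2 * √(π * u) ≠ 0)
  have h₂ := ((hasDerivAt_const u (-c ^ 2)).div ((hasDerivAt_id' u).const_mul 4)
    (by positivity : 4 * u ≠ 0)).exp
  refine (h₁.mul h₂).congr_deriv ?_
  have hS : √(π * u) ^ 2 = π * u := sq_sqrt (by positivity)
  simp only [Pi.div_apply, Pi.inv_apply, heatKernel]
  field_simp
  rw [hS]
  ring

lemma abs_deriv_heatKernel_le (hu : 0 < u) :
    |deriv (heatKernel · c) u| ≤ (2 * √π)⁻¹ * u ^ (-(3 / 2 : ℝ)) := by
  have hexp : exp (-c ^ 2 / (4 * u)) * (c ^ 2 / (4 * u) + 1) ≤ 1 := by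
    rw [neg_div, exp_neg, inv_mul_le_one₀ (exp_pos _)]
    exact add_one_le_exp _
  have hfactor : exp (-c ^ 2 / (4 * u)) * |c ^ 2 / (4 * u ^ 2) - 1 / (2 * u)| ≤ u⁻¹ := by
    calc exp (-c ^ 2 / (4 * u)) * |c ^ 2 / (4 * u ^ 2) - 1 / (2 * u)|
        ≤ exp (-c ^ 2 / (4 * u)) * ((c ^ 2 / (4 * u) + 1) * u⁻¹) := by
          gcongr
          rw [abs_le]
          constructor <;> field_simp <;> nlinarith [sq_nonneg c]
      _ ≤ u⁻¹ := by
          rw [← mul_assoc]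
          exact mul_le_of_le_one_left (by positivity) hexp
  rw [(hasDerivAt_heatKernel hu).deriv, heatKernel_eq_rpow hu.le, abs_mul,
    abs_of_nonneg (by positivity), show -(3 / 2 : ℝ) = -(1 / 2) - 1 by norm_num,
    rpow_sub_one hu.ne', div_eq_mul_inv, div_eq_mul_inv _ u, mul_assoc, mul_assoc]
  gcongr

lemma abs_heatKernel_mul_le {x M : ℝ} (hu : 0 ≤ u) (hx : |x| ≤ M) :
    |heatKernel u c * x| ≤ M * ((2 * √π)⁻¹ * u ^ (-(1 / 2 : ℝ))) := by
  rw [abs_mul, abs_of_nonneg heatKernel_nonneg, mul_comm]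
  exact mul_le_mul hx (heatKernel_le hu) heatKernel_nonneg ((abs_nonneg x).trans hx)

end HeatKernel

section RpowIntegrals

variable {a b t : ℝ}

lemma intervalIntegrable_sub_rpow_neg_half :
    IntervalIntegrable (fun s => (t - s) ^ (-(1 / 2 : ℝ))) volume a b := by
  simpa using (intervalIntegrable_rpow' (a := t - a) (b := t - b)
    (r := -(1 / 2)) (by norm_num)).comp_sub_left t

lemma integral_sub_rpow_neg_half :
    ∫ s in a..t, (t - s) ^ (-(1 / 2 : ℝ)) = 2 * √(t - a) := by
  rw [integral_comp_sub_left (fun x => x ^ (-(1 / 2 : ℝ))), sub_self,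
    integral_rpow (Or.inl (by norm_num)), sqrt_eq_rpow]
  norm_num
  ring

lemma integral_sub_rpow_neg_three_halves_le (hab : a ≤ b) (hbt : b < t) :
    ∫ s in a..b, (t - s) ^ (-(3 / 2 : ℝ)) ≤ 2 * (t - b) ^ (-(1 / 2 : ℝ)) := by
  rw [integral_comp_sub_left (fun x => x ^ (-(3 / 2 : ℝ))),
    integral_rpow (Or.inr ⟨by norm_num, fun h => ?_⟩)]
  · norm_num
    linarith [rpow_nonneg (show 0 ≤ t - a by linarith) (-(1 / 2 : ℝ))]
  · rw [uIcc_of_le (by linarith)] at h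
    linarith [h.1]

lemma intervalIntegrable_sub_rpow_of_lt (hab : a ≤ b) (hbt : b < t) (r : ℝ) :
    IntervalIntegrable (fun s => (t - s) ^ r) volume a b := by
  refine ContinuousOn.intervalIntegrable fun s hs => ?_
  rw [uIcc_of_le hab] at hs
  exact ((continuousAt_const.sub continuousAt_id).rpow_const
    (Or.inl (sub_pos.2 (hs.2.trans_lt hbt)).ne')).continuousWithinAt

end RpowIntegrals

theorem AbsolutelyContinuousOnInterval.integral_mul_eq_mul_integral_sub_integral_deriv_mul
    {K g : ℝ → ℝ} {a b : ℝ} (hK : AbsolutelyContinuousOnInterval K a b)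
    (hg : IntervalIntegrable g volume a b) :
    ∫ x in a..b, K x * g x =
      K b * (∫ x in a..b, g x) - ∫ x in a..b, deriv K x * ∫ y in a..x, g y := by
  have hparts := hK.integral_mul_deriv_eq_deriv_mul
    (hg.absolutelyContinuousOnInterval_intervalIntegral (c := a) left_mem_uIcc)
  rw [integral_same, mul_zero, sub_zero] at hparts
  rw [← hparts]
  refine integral_congr_ae ?_
  filter_upwards [hg.ae_hasDerivAt_integral] with x hx hxab
  rw [(hx (uIoc_subset_uIcc hxab) a left_mem_uIcc).deriv]

section HeatKernelIntegrals

variable {g : ℝ → ℝ} {a b t c M : ℝ}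

lemma intervalIntegrable_heatKernel_sub_mul (hab : a ≤ b) (hbt : b ≤ t)
    (hg : AEStronglyMeasurable g (volume.restrict (Ioc a b)))
    (hgM : ∀ s ∈ Ioc a b, |g s| ≤ M) :
    IntervalIntegrable (fun s => heatKernel (t - s) c * g s) volume a b := by
  have hmaj := (intervalIntegrable_sub_rpow_neg_half (a := a) (b := b) (t := t)).const_mul
    (2 * √π)⁻¹ |>.const_mul M
  rw [intervalIntegrable_iff_integrableOn_Ioc_of_le hab] at hmaj ⊢
  refine hmaj.mono' ?_ ?_
  · exact (measurable_heatKernel.comp (measurable_const.sub measurable_id)).aestronglyMeasurable.mul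
      hg
  · exact ae_restrict_of_forall_mem measurableSet_Ioc fun s hs =>
      abs_heatKernel_mul_le (sub_nonneg.2 (hs.2.trans hbt)) (hgM s hs)

lemma abs_integral_heatKernel_sub_mul_le (hgM : ∀ s ∈ Ioc a t, |g s| ≤ M) (hat : a ≤ t) :
    |∫ s in a..t, heatKernel (t - s) c * g s| ≤ M / √π * √(t - a) := by
  calc |∫ s in a..t, heatKernel (t - s) c * g s|
      ≤ ∫ s in a..t, M * ((2 * √π)⁻¹ * (t - s) ^ (-(1 / 2 : ℝ))) :=
        (norm_eq_abs _).ge.trans <| norm_integral_le_of_norm_le hat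
          (ae_of_all _ fun s hs => abs_heatKernel_mul_le (sub_nonneg.2 hs.2) (hgM s hs))
          ((intervalIntegrable_sub_rpow_neg_half.const_mul _).const_mul _)
    _ = M / √π * √(t - a) := by
        rw [intervalIntegral.integral_const_mul, intervalIntegral.integral_const_mul,
          integral_sub_rpow_neg_half]
        field_simp

lemma abs_integral_heatKernel_sub_mul_le_of_abs_primitive_le (hab : a ≤ b) (hbt : b < t)
    (hg : IntervalIntegrable g volume a b) (hA : ∀ r ∈ Icc a b, |∫ s in a..r, g s| ≤ M) :
    |∫ s in a..b, heatKernel (t - s) c * g s| ≤ 3 * M / (2 * √π * √(t - b)) := by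
  have hM : 0 ≤ M := (abs_nonneg _).trans (hA a ⟨le_rfl, hab⟩)
  have hK : AbsolutelyContinuousOnInterval (fun s => heatKernel (t - s) c) a b := by
    refine ContDiffOn.absolutelyContinuousOnInterval ?_
    refine (contDiffOn_heatKernel.of_le (by norm_num)).comp (by fun_prop) fun s hs => ?_
    rw [uIcc_of_le hab] at hs
    exact sub_pos.2 (hs.2.trans_lt hbt)
  have hboundary : |heatKernel (t - b) c * ∫ s in a..b, g s| ≤
      M * ((2 * √π)⁻¹ * (t - b) ^ (-(1 / 2 : ℝ))) :=
    abs_heatKernel_mul_le (sub_nonneg.2 hbt.le) (hA b ⟨hab, le_rfl⟩)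
  have hbulk : |∫ r in a..b, deriv (fun s => heatKernel (t - s) c) r * ∫ s in a..r, g s| ≤
      M * ((2 * √π)⁻¹ * (2 * (t - b) ^ (-(1 / 2 : ℝ)))) := by
    calc _ ≤ ∫ r in a..b, M * ((2 * √π)⁻¹ * (t - r) ^ (-(3 / 2 : ℝ))) := by
          refine (norm_eq_abs _).ge.trans <|
            norm_integral_le_of_norm_le hab (ae_of_all _ fun r hr => ?_) ?_
          · have hderiv : deriv (fun s => heatKernel (t - s) c) r =
                -deriv (heatKernel · c) (t - r) := deriv_comp_const_sub (f := (heatKernel · c)) ..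
            rw [hderiv, norm_eq_abs, abs_mul, abs_neg, mul_comm]
            exact mul_le_mul (hA r ⟨hr.1.le, hr.2⟩)
              (abs_deriv_heatKernel_le (sub_pos.2 (hr.2.trans_lt hbt))) (abs_nonneg _) hM
          · exact ((intervalIntegrable_sub_rpow_of_lt hab hbt _).const_mul _).const_mul _
      _ ≤ M * ((2 * √π)⁻¹ * (2 * (t - b) ^ (-(1 / 2 : ℝ)))) := by
          rw [intervalIntegral.integral_const_mul, intervalIntegral.integral_const_mul]
          gcongr
          exact integral_sub_rpow_neg_three_halves_le hab hbt
  rw [hK.integral_mul_eq_mul_integral_sub_integral_deriv_mul hg]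
  calc _ ≤ _ := abs_sub _ _
    _ ≤ _ := add_le_add hboundary hbulk
    _ = 3 * M / (2 * √π * √(t - b)) := by
        rw [rpow_neg (sub_nonneg.2 hbt.le), ← sqrt_eq_rpow]
        field_simp
        ring

lemma abs_integral_heatKernel_sub_mul_le_sqrt {δ N : ℝ} (hδ : 0 < δ) (ht : 0 < t)
    (hg : AEStronglyMeasurable g) (hgM : ∀ s ∈ Ioc 0 t, |g s| ≤ M)
    (hA : ∀ r ∈ Icc 0 t, |∫ s in (0 : ℝ)..r, g s| ≤ δ * N) :
    |∫ s in (0 : ℝ)..t, heatKernel (t - s) c * g s| ≤ (3 * N + 2 * M) / (2 * √π) * √δ := by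
  have hπ : 0 < √π := sqrt_pos.2 pi_pos
  have hM : 0 ≤ M := (abs_nonneg _).trans (hgM t ⟨ht, le_rfl⟩)
  have hN : 0 ≤ N := nonneg_of_mul_nonneg_right
    ((abs_nonneg _).trans (hA 0 ⟨le_rfl, ht.le⟩)) hδ
  rcases le_or_gt t δ with htδ | hδt
  · calc _ ≤ M / √π * √(t - 0) := abs_integral_heatKernel_sub_mul_le hgM ht.le
      _ ≤ (3 * N + 2 * M) / (2 * √π) * √δ := by
          rw [sub_zero]
          refine mul_le_mul ?_ (sqrt_le_sqrt htδ) (sqrt_nonneg _) (by positivity)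
          rw [div_le_div_iff₀ hπ (by positivity)]
          nlinarith [mul_nonneg hN hπ.le]
  set b := t - δ
  have hb : 0 ≤ b := by linarith
  have hbt : b < t := by linarith
  have hIoc : Ioc 0 b ⊆ Ioc 0 t := Ioc_subset_Ioc_right hbt.le
  have hg_int : IntervalIntegrable g volume 0 b :=
    (intervalIntegrable_iff_integrableOn_Ioc_of_le hb).2 <| (integrable_const M).mono' hg.restrict
      (ae_restrict_of_forall_mem measurableSet_Ioc fun s hs => hgM s (hIoc hs))
  have hbulk := abs_integral_heatKernel_sub_mul_le_of_abs_primitive_le (c := c) hb hbt hg_int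
    fun r hr => hA r ⟨hr.1, hr.2.trans hbt.le⟩
  have htail := abs_integral_heatKernel_sub_mul_le (c := c)
    (fun s hs => hgM s ⟨hb.trans_lt hs.1, hs.2⟩) hbt.le
  rw [show t - b = δ by ring] at hbulk htail
  rw [← integral_add_adjacent_intervals
    (intervalIntegrable_heatKernel_sub_mul hb hbt.le hg.restrict fun s hs => hgM s (hIoc hs))
    (intervalIntegrable_heatKernel_sub_mul hbt.le le_rfl hg.restrict
      fun s hs => hgM s ⟨hb.trans_lt hs.1, hs.2⟩)]
  calc _ ≤ _ := abs_add_le _ _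
    _ ≤ 3 * (δ * N) / (2 * √π * √δ) + M / √π * √δ := add_le_add hbulk htail
    _ = (3 * N + 2 * M) / (2 * √π) * √δ := by
        have hsδ : √δ ^ 2 = δ := sq_sqrt hδ.le
        have : 0 < √δ := sqrt_pos.2 hδ
        field_simp
        rw [hsδ]
        ring

end HeatKernelIntegrals

lemma abs_integral_comp_div_le {f : ℝ → ℝ} {ε M r : ℝ} (hε : 0 < ε) (hr : 0 ≤ r)
    (hf : ∀ r, 0 ≤ r → |∫ s in (0 : ℝ)..r, f s| ≤ M) :
    |∫ s in (0 : ℝ)..r, f (s / ε)| ≤ ε * M := by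
  rw [integral_comp_div f hε.ne', zero_div, smul_eq_mul, abs_mul, abs_of_pos hε]
  exact mul_le_mul_of_nonneg_left (hf _ (div_nonneg hr hε.le)) hε.le

theorem averaged_integral_sqrt_eps_bound_general (T : ℝ)
    (σ : ℝ → ℝ → ℝ) (σbar : ℝ → ℝ)
    (hmeas : Measurable (Function.uncurry σ))
    (CH : ℝ) (hH : ∀ s : ℝ, 0 ≤ s → ∀ y, |σ s y - σbar y| ≤ CH)
    (CG : ℝ) (hG : ∀ r : ℝ, 0 ≤ r → ∀ y,
      |∫ s in (0:ℝ)..r, (σ s y - σbar y)| ≤ CG) :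
    ∃ C : ℝ, ∀ (t x y ε : ℝ), 0 < t → t ≤ T → 0 < ε →
      |∫ s in (0:ℝ)..t,
          (2 * Real.sqrt (π * (t - s)))⁻¹ * Real.exp (-(x - y) ^ 2 / (4 * (t - s))) *
            (σ (s / ε) y - σbar y)|
        ≤ C * Real.sqrt ε := by
  refine ⟨(3 * CG + 2 * CH) / (2 * √π), fun t x y ε ht _ hε => ?_⟩
  have hg : Measurable fun s => σ (s / ε) y - σbar y :=
    (hmeas.comp ((measurable_id.div_const ε).prodMk measurable_const)).sub measurable_const
  exact abs_integral_heatKernel_sub_mul_le_sqrt hε ht hg.aestronglyMeasurable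
    (fun s hs => hH _ (div_nonneg hs.1.le hε.le) y)
    fun r hr => abs_integral_comp_div_le hε hr.1 fun r hr => hG r hr y

/-- Inequality (11) of the paper: if `H(s,y) = σ(s,y) - σ̄(y)` and
`G(r,y) = ∫₀ʳ (σ(s,y) - σ̄(y)) ds` are bounded, then
`|∫₀ᵗ p(t-s, x-y)(σ(s/ε,y) - σ̄(y)) ds| ≤ C √ε`. -/
theorem averaged_integral_sqrt_eps_bound (T : ℝ) (hT : 0 < T)
    (σ : ℝ → ℝ → ℝ) (σbar : ℝ → ℝ)
    (hmeas : Measurable (Function.uncurry σ)) (hbarmeas : Measurable σbar)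
    (CH : ℝ) (hH : ∀ s : ℝ, 0 ≤ s → ∀ y, |σ s y - σbar y| ≤ CH)
    (CG : ℝ) (hG : ∀ r : ℝ, 0 ≤ r → ∀ y,
      |∫ s in (0:ℝ)..r, (σ s y - σbar y)| ≤ CG) :
    ∃ C : ℝ, ∀ (t x y ε : ℝ), 0 < t → t ≤ T → 0 < ε →
      |∫ s in (0:ℝ)..t,
          (2 * Real.sqrt (π * (t - s)))⁻¹ * Real.exp (-(x - y) ^ 2 / (4 * (t - s))) *
            (σ (s / ε) y - σbar y)|
        ≤ C * Real.sqrt ε :=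
  averaged_integral_sqrt_eps_bound_general T σ σbar hmeas CH hH CG hG
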